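/- arXiv:2410.09201 — 6 statements merged into one kernel-verified Lean document; each statement's English description precedes it below -/
import Mathlib

section
/- Let voters and candidates be points in ℝ² with the Manhattan (ℓ¹) metric, with the median x-coordinate and median y-coordinate of the voters both equal to 0. For each nonempty closed quadrant Q_i, let c_i be a candidate in Q_i minimizing ℓ¹-distance to the origin. Then for any candidate c lying in quadrant Q_i with c ≠ c_i, at least half of the voters are at ℓ¹-distance from c_i strictly less than or equal to their ℓ¹-distance from c; in particular at least half the voters weakly prefer c_i to c under proximity voting. -/
/-!
Reflect the common quadrant onto the first one; this is an ℓ¹-isometry fixing the origin, so the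
minimiser `a` and the other candidate `b` satisfy `a₁ + a₂ ≤ b₁ + b₂`. If `a₁ - b₁ ≤ a₂ - b₂`, this
gives `|a₂ - b₂| ≤ b₁ - a₁`: a voter with `v₁ ≤ 0` reaches `a` with a horizontal saving of `b₁ - a₁`
that outweighs any vertical loss, so every voter in the left half-plane weakly prefers `a`.
Otherwise the same holds for the lower half-plane. By the median assumption, either half-plane
contains at least half the voters.
-/

/-- Manhattan (ℓ¹) distance in the plane. -/
noncomputable def d1 (p q : ℝ × ℝ) : ℝ := |p.1 - q.1| + |p.2 - q.2|

lemma d1_swap (p q : ℝ × ℝ) : d1 p.swap q.swap = d1 p q := by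
  simp only [d1, Prod.fst_swap, Prod.snd_swap, add_comm]

lemma d1_mul_mul {εx εy : ℝ} (hx : |εx| = 1) (hy : |εy| = 1) (p q : ℝ × ℝ) :
    d1 (εx * p.1, εy * p.2) (εx * q.1, εy * q.2) = d1 p q := by
  simp only [d1, ← mul_sub, abs_mul, hx, hy, one_mul]

lemma d1_zero_left_of_nonneg {p : ℝ × ℝ} (h₁ : 0 ≤ p.1) (h₂ : 0 ≤ p.2) :
    d1 (0, 0) p = p.1 + p.2 := by
  simp only [d1, zero_sub, abs_neg, abs_of_nonneg h₁, abs_of_nonneg h₂]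

lemma d1_le_d1_of_fst_nonpos {a b v : ℝ × ℝ} (ha : 0 ≤ a.1) (hb : 0 ≤ b.1)
    (hsum : a.1 + a.2 ≤ b.1 + b.2) (hdiff : a.1 - b.1 ≤ a.2 - b.2) (hv : v.1 ≤ 0) :
    d1 v a ≤ d1 v b := by
  have hgap : |b.2 - a.2| ≤ b.1 - a.1 := abs_le.2 ⟨by linarith, by linarith⟩
  have htri : |v.2 - a.2| ≤ |v.2 - b.2| + |b.2 - a.2| := abs_sub_le v.2 b.2 a.2
  rw [d1, d1, abs_of_nonpos (by linarith : v.1 - a.1 ≤ 0),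
    abs_of_nonpos (by linarith : v.1 - b.1 ≤ 0)]
  linarith

lemma d1_le_d1_of_fst_nonpos_or_snd_nonpos {a b : ℝ × ℝ} (ha : 0 ≤ a.1 ∧ 0 ≤ a.2)
    (hb : 0 ≤ b.1 ∧ 0 ≤ b.2) (hsum : a.1 + a.2 ≤ b.1 + b.2) :
    (∀ v : ℝ × ℝ, v.1 ≤ 0 → d1 v a ≤ d1 v b) ∨ (∀ v : ℝ × ℝ, v.2 ≤ 0 → d1 v a ≤ d1 v b) := by
  rcases le_total (a.1 - b.1) (a.2 - b.2) with hdiff | hdiff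
  · exact .inl fun v => d1_le_d1_of_fst_nonpos ha.1 hb.1 hsum hdiff
  · refine .inr fun v hv => ?_
    rw [← d1_swap, ← d1_swap v]
    exact d1_le_d1_of_fst_nonpos (a := a.swap) (b := b.swap) ha.2 hb.2 (by simpa [add_comm])
      hdiff hv

section Counting

variable {α : Type*} {N : ℕ}

lemma le_two_mul_card_of_imp [Finite α] {P Q : α → Prop} (hP : N ≤ 2 * Nat.card {x // P x})
    (hPQ : ∀ x, P x → Q x) : N ≤ 2 * Nat.card {x // Q x} :=
  hP.trans <| Nat.mul_le_mul_left 2 <|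
    Nat.card_le_card_of_injective _ (Subtype.impEmbedding _ _ hPQ).injective

lemma le_two_mul_card_mul_nonpos {f : α → ℝ} {ε : ℝ} (hε : ε = 1 ∨ ε = -1)
    (hle : N ≤ 2 * Nat.card {x // f x ≤ 0}) (hge : N ≤ 2 * Nat.card {x // 0 ≤ f x}) :
    N ≤ 2 * Nat.card {x // ε * f x ≤ 0} := by
  rcases hε with rfl | rfl
  · simpa using hle
  · simpa using hge

end Counting

theorem quadrant_lemma_general (n m : ℕ) (V : Fin n → ℝ × ℝ) (C : Fin m → ℝ × ℝ)
    (hxle : 2 * Nat.card {v : Fin n // (V v).1 ≤ 0} ≥ n)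
    (hxge : 2 * Nat.card {v : Fin n // 0 ≤ (V v).1} ≥ n)
    (hyle : 2 * Nat.card {v : Fin n // (V v).2 ≤ 0} ≥ n)
    (hyge : 2 * Nat.card {v : Fin n // 0 ≤ (V v).2} ≥ n)
    (εx εy : ℝ) (hεx : εx = 1 ∨ εx = -1) (hεy : εy = 1 ∨ εy = -1)
    (i₀ i : Fin m)
    (hQ₀ : 0 ≤ εx * (C i₀).1 ∧ 0 ≤ εy * (C i₀).2)
    (hmin : ∀ k, (0 ≤ εx * (C k).1 ∧ 0 ≤ εy * (C k).2) →
      d1 (0, 0) (C i₀) ≤ d1 (0, 0) (C k))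
    (hQ : 0 ≤ εx * (C i).1 ∧ 0 ≤ εy * (C i).2) :
    2 * Nat.card {v : Fin n // d1 (V v) (C i₀) ≤ d1 (V v) (C i)} ≥ n := by
  set σ : ℝ × ℝ → ℝ × ℝ := fun p => (εx * p.1, εy * p.2)
  have hσ : ∀ p q, d1 (σ p) (σ q) = d1 p q :=
    d1_mul_mul ((abs_eq zero_le_one).2 hεx) ((abs_eq zero_le_one).2 hεy)
  have hsum : (σ (C i₀)).1 + (σ (C i₀)).2 ≤ (σ (C i)).1 + (σ (C i)).2 := by
    have h := hmin i hQ
    rwa [← hσ, ← hσ (0, 0), show σ (0, 0) = (0, 0) by simp [σ],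
      d1_zero_left_of_nonneg hQ₀.1 hQ₀.2, d1_zero_left_of_nonneg hQ.1 hQ.2] at h
  rcases d1_le_d1_of_fst_nonpos_or_snd_nonpos hQ₀ hQ hsum with hleft | hlower
  · refine le_two_mul_card_of_imp (le_two_mul_card_mul_nonpos hεx hxle hxge) fun v hv => ?_
    simpa only [hσ] using hleft (σ (V v)) hv
  · refine le_two_mul_card_of_imp (le_two_mul_card_mul_nonpos hεy hyle hyge) fun v hv => ?_
    simpa only [hσ] using hlower (σ (V v)) hv

/-- Quadrant lemma: if the voter medians are at the origin, `c_{i₀}` is a candidate in a closed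
quadrant minimizing ℓ¹-distance to the origin, and `c_i ≠ c_{i₀}` is any candidate in the same
quadrant, then at least half the voters are weakly closer to `c_{i₀}` than to `c_i`. -/
theorem quadrant_lemma (n m : ℕ) (V : Fin n → ℝ × ℝ) (C : Fin m → ℝ × ℝ)
    (hxle : 2 * Nat.card {v : Fin n // (V v).1 ≤ 0} ≥ n)
    (hxge : 2 * Nat.card {v : Fin n // 0 ≤ (V v).1} ≥ n)
    (hyle : 2 * Nat.card {v : Fin n // (V v).2 ≤ 0} ≥ n)
    (hyge : 2 * Nat.card {v : Fin n // 0 ≤ (V v).2} ≥ n)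
    (εx εy : ℝ) (hεx : εx = 1 ∨ εx = -1) (hεy : εy = 1 ∨ εy = -1)
    (i₀ i : Fin m)
    (hQ₀ : 0 ≤ εx * (C i₀).1 ∧ 0 ≤ εy * (C i₀).2)
    (hmin : ∀ k, (0 ≤ εx * (C k).1 ∧ 0 ≤ εy * (C k).2) →
      d1 (0, 0) (C i₀) ≤ d1 (0, 0) (C k))
    (hQ : 0 ≤ εx * (C i).1 ∧ 0 ≤ εy * (C i).2)
    (hne : C i ≠ C i₀) :
    2 * Nat.card {v : Fin n // d1 (V v) (C i₀) ≤ d1 (V v) (C i)} ≥ n :=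
  quadrant_lemma_general n m V C hxle hxge hyle hyge εx εy hεx hεy i₀ i hQ₀ hmin hQ
end

section
/- Let m ≥ 1 and for each voter j let ρ(·, j) : {1,…,m} → {1,…,m} be a bijection (the rank of each candidate). Place candidate i at x_i = 2m·e_i ∈ ℝ^m and voter j at y_j = (m − ρ(1,j), …, m − ρ(m,j)). Then for every voter j and every candidate i, the ℓ∞-distance from y_j to x_i equals m + ρ(i,j); in particular the ℓ∞-distances from y_j to the candidates are strictly increasing in the rank ρ(i,j), so the embedding realizes each voter's preference order under proximity voting. -/
/-! Every voter coordinate `m - ρ` lies in `[0, m]`, so against the candidate `2m·e_i` the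
coordinate `i` contributes `2m - (m - ρ(i,j)) = m + ρ(i,j) ≥ m`, while every other coordinate
contributes at most `m`. -/

lemma abs_sub_single_le_of_mem_Icc {ι : Type*} [DecidableEq ι] {v : ι → ℝ} {a : ℝ}
    (hv : ∀ k, v k ∈ Set.Icc 0 a) (i k : ι) : |v k - (Pi.single i (2 * a) : ι → ℝ) k| ≤ 2 * a - v i := by
  obtain ⟨hvi₀, hvia⟩ := hv i
  obtain ⟨hvk₀, hvka⟩ := hv k
  rcases eq_or_ne k i with rfl | hki
  · rw [Pi.single_eq_same, abs_of_nonpos (by linarith)]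
    exact (neg_sub _ _).le
  · rw [Pi.single_eq_of_ne hki, sub_zero, abs_of_nonneg hvk₀]
    linarith

lemma iSup_abs_sub_single_eq_of_mem_Icc {ι : Type*} [Finite ι] [DecidableEq ι] {v : ι → ℝ}
    {a : ℝ} (hv : ∀ k, v k ∈ Set.Icc 0 a) (i : ι) : ⨆ k, |v k - (Pi.single i (2 * a) : ι → ℝ) k| = 2 * a - v i := by
  have : Nonempty ι := ⟨i⟩
  refine le_antisymm (ciSup_le (abs_sub_single_le_of_mem_Icc hv i)) ?_
  refine le_ciSup_of_le (Set.finite_range _).bddAbove i (le_of_eq ?_)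
  rw [Pi.single_eq_same, abs_of_nonpos (by linarith [(hv i).1, (hv i).2])]
  ring

theorem candidate_simplex_inf_general (m : ℕ) (J : Type*) (ρ : J → Fin m ≃ Fin m)
    (x : Fin m → Fin m → ℝ) (hx : ∀ i k, x i k = if k = i then 2 * (m : ℝ) else 0)
    (y : J → Fin m → ℝ) (hy : ∀ j k, y j k = (m : ℝ) - (((ρ j k : ℕ) : ℝ) + 1)) :
    (∀ (j : J) (i : Fin m),
        (⨆ k, |y j k - x i k|) = (m : ℝ) + (((ρ j i : ℕ) : ℝ) + 1)) ∧
    (∀ (j : J) (i i' : Fin m), (ρ j i : ℕ) < (ρ j i' : ℕ) →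
        (⨆ k, |y j k - x i k|) < ⨆ k, |y j k - x i' k|) := by
  have hx_single : ∀ i, x i = Pi.single i (2 * (m : ℝ)) := fun i ↦
    funext fun k ↦ by rw [hx, Pi.single_apply]
  have hy_mem : ∀ j k, y j k ∈ Set.Icc 0 (m : ℝ) := fun j k ↦ by
    have hrank : ((ρ j k : ℕ) : ℝ) + 1 ≤ m := by exact_mod_cast (ρ j k).isLt
    rw [hy]
    constructor <;> linarith [(ρ j k : ℕ).cast_nonneg (α := ℝ)]
  have hdist : ∀ j i, (⨆ k, |y j k - x i k|) = (m : ℝ) + (((ρ j i : ℕ) : ℝ) + 1) := by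
    intro j i
    rw [hx_single, iSup_abs_sub_single_eq_of_mem_Icc (hy_mem j) i, hy]
    ring
  refine ⟨hdist, fun j i i' hlt ↦ ?_⟩
  rw [hdist, hdist]
  have : ((ρ j i : ℕ) : ℝ) < (ρ j i' : ℕ) := by exact_mod_cast hlt
  linarith

/-- Candidate-simplex embedding under the ℓ∞ norm: candidate `i` is at `2m·e_i`, voter `j` is at
`(m - ρ(1,j), …, m - ρ(m,j))` where `ρ(i,j) = (ρ j i) + 1 ∈ {1,…,m}` is the rank of candidate
`i` for voter `j`. Then the ℓ∞-distance from voter `j` to candidate `i` is `m + ρ(i,j)`, and in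
particular these distances are strictly increasing in the rank. -/
theorem candidate_simplex_inf (m : ℕ) (hm : 1 ≤ m) (J : Type*) (ρ : J → Fin m ≃ Fin m)
    (x : Fin m → Fin m → ℝ) (hx : ∀ i k, x i k = if k = i then 2 * (m : ℝ) else 0)
    (y : J → Fin m → ℝ) (hy : ∀ j k, y j k = (m : ℝ) - (((ρ j k : ℕ) : ℝ) + 1)) :
    (∀ (j : J) (i : Fin m),
        (⨆ k, |y j k - x i k|) = (m : ℝ) + (((ρ j i : ℕ) : ℝ) + 1)) ∧
    (∀ (j : J) (i i' : Fin m), (ρ j i : ℕ) < (ρ j i' : ℕ) →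
        (⨆ k, |y j k - x i k|) < ⨆ k, |y j k - x i' k|) :=
  candidate_simplex_inf_general m J ρ x hx y hy
end

section
/- Let m ≥ 1, p ≥ 1 a real number, and for each voter j let ρ(·, j) : {1,…,m} → {1,…,m} be a bijection. Place candidate i at x_i = 2m·e_i ∈ ℝ^m and voter j at y_j = (m − ρ(1,j), …, m − ρ(m,j)). Then for any candidates i, k with ρ(k,j) < ρ(i,j), the ℓᵖ-distance from y_j to x_k is strictly less than the ℓᵖ-distance from y_j to x_i. -/
/-! The comparison reduces to one coordinate: the point `a • e_c` differs from the
origin only in coordinate `c`, so `∑ |y - a • e_c|ᵖ = ∑ |y|ᵖ + ((a - y_c)ᵖ - y_cᵖ)` whenever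
`0 ≤ y_c ≤ a`. The voter's coordinates lie in `[0, m - 1]` and decrease with rank, while
`t ↦ (a - t)ᵖ - tᵖ` is strictly decreasing on `[0, a]`. -/

open Finset

lemma sum_abs_sub_single_rpow {ι : Type*} [Fintype ι] [DecidableEq ι] (f : ι → ℝ) (c : ι)
    (a p : ℝ) :
    ∑ l, |f l - (Pi.single c a : ι → ℝ) l| ^ p
      = ∑ l, |f l| ^ p + (|f c - a| ^ p - |f c| ^ p) := by
  have hterm : ∀ l, |f l - (Pi.single c a : ι → ℝ) l| ^ p
      = |f l| ^ p + if l = c then |f c - a| ^ p - |f c| ^ p else 0 := by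
    intro l
    by_cases h : l = c
    · subst h; simp
    · simp [h]
  simp only [hterm, sum_add_distrib, sum_ite_eq', mem_univ, if_true]

lemma rpow_sub_sub_rpow_lt_of_lt {a p s t : ℝ} (hp : 0 < p) (hs : 0 ≤ s) (hst : s < t)
    (hta : t ≤ a) : (a - t) ^ p - t ^ p < (a - s) ^ p - s ^ p := by
  have hpow : s ^ p < t ^ p := Real.rpow_lt_rpow hs hst hp
  have hpow' : (a - t) ^ p ≤ (a - s) ^ p :=
    Real.rpow_le_rpow (sub_nonneg.2 hta) (by linarith) hp.le
  linarith

lemma sum_abs_sub_single_rpow_of_mem_Icc {ι : Type*} [Fintype ι] [DecidableEq ι] (f : ι → ℝ)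
    (c : ι) {a : ℝ} (p : ℝ) (hf : f c ∈ Set.Icc 0 a) :
    ∑ l, |f l - (Pi.single c a : ι → ℝ) l| ^ p
      = ∑ l, |f l| ^ p + ((a - f c) ^ p - f c ^ p) := by
  rw [sum_abs_sub_single_rpow, abs_of_nonneg hf.1, abs_of_nonpos (sub_nonpos.2 hf.2), neg_sub]

theorem candidate_simplex_lp_general (m : ℕ) (p : ℝ) (hp : 1 ≤ p)
    (J : Type*) (ρ : J → Fin m ≃ Fin m)
    (x : Fin m → Fin m → ℝ) (hx : ∀ i k, x i k = if k = i then 2 * (m : ℝ) else 0)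
    (y : J → Fin m → ℝ) (hy : ∀ j k, y j k = (m : ℝ) - (((ρ j k : ℕ) : ℝ) + 1)) :
    ∀ (j : J) (i k : Fin m), (ρ j k : ℕ) < (ρ j i : ℕ) →
      (∑ l, |y j l - x k l| ^ p) ^ (1 / p) < (∑ l, |y j l - x i l| ^ p) ^ (1 / p) := by
  intro j i k hlt
  have hp0 : 0 < p := by linarith
  have hx_single : ∀ c, x c = Pi.single c (2 * (m : ℝ)) :=
    fun c => funext fun l => by rw [hx, Pi.single_apply]
  have hy_mem : ∀ c, y j c ∈ Set.Icc 0 (2 * (m : ℝ)) := by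
    intro c
    have hc : ((ρ j c : ℕ) : ℝ) + 1 ≤ m := by exact_mod_cast (ρ j c).isLt
    rw [hy]
    constructor <;> linarith [Nat.cast_nonneg (α := ℝ) (ρ j c : ℕ)]
  have hy_lt : y j i < y j k := by
    rw [hy, hy]
    have : ((ρ j k : ℕ) : ℝ) < (ρ j i : ℕ) := by exact_mod_cast hlt
    linarith
  have hsum : ∑ l, |y j l - x k l| ^ p < ∑ l, |y j l - x i l| ^ p := by
    rw [hx_single, hx_single, sum_abs_sub_single_rpow_of_mem_Icc _ _ _ (hy_mem k),
      sum_abs_sub_single_rpow_of_mem_Icc _ _ _ (hy_mem i)]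
    linarith [rpow_sub_sub_rpow_lt_of_lt hp0 (hy_mem i).1 hy_lt (hy_mem k).2]
  exact Real.rpow_lt_rpow (sum_nonneg fun l _ => by positivity) hsum (by positivity)

/-- Candidate-simplex embedding under ℓᵖ norms, `p ≥ 1`: candidate `i` at `2m·e_i`, voter `j` at
`(m - ρ(1,j), …, m - ρ(m,j))` with rank `ρ(i,j) = (ρ j i) + 1`. If `ρ(k,j) < ρ(i,j)` then the
ℓᵖ-distance from voter `j` to candidate `k` is strictly smaller than that to candidate `i`. -/
theorem candidate_simplex_lp (m : ℕ) (hm : 1 ≤ m) (p : ℝ) (hp : 1 ≤ p)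
    (J : Type*) (ρ : J → Fin m ≃ Fin m)
    (x : Fin m → Fin m → ℝ) (hx : ∀ i k, x i k = if k = i then 2 * (m : ℝ) else 0)
    (y : J → Fin m → ℝ) (hy : ∀ j k, y j k = (m : ℝ) - (((ρ j k : ℕ) : ℝ) + 1)) :
    ∀ (j : J) (i k : Fin m), (ρ j k : ℕ) < (ρ j i : ℕ) →
      (∑ l, |y j l - x k l| ^ p) ^ (1 / p) < (∑ l, |y j l - x i l| ^ p) ^ (1 / p) :=
  candidate_simplex_lp_general m p hp J ρ x hx y hy
end

section
/- Let n ≥ 1, m ≥ 1, B ≥ m a real number, and for each voter j ∈ {1,…,n} let ρ(·, j) : {1,…,m} → {1,…,m} be a bijection. Place voter j at y_j = B·e_j ∈ ℝⁿ and candidate i at x_i = (−ρ(i,1), …, −ρ(i,n)). Then for every voter j and candidate i, the ℓ∞-distance from y_j to x_i equals B + ρ(i,j); hence the distances are strictly increasing in ρ(i,j) and the embedding realizes each voter's preferences under ℓ∞ proximity voting. -/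
theorem ciSup_eq_of_forall_le {ι α : Type*} [ConditionallyCompleteLinearOrder α] {f : ι → α}
    (j : ι) (h : ∀ k, f k ≤ f j) : ⨆ k, f k = f j :=
  haveI : Nonempty ι := ⟨j⟩
  ciSup_eq_of_forall_le_of_forall_lt_exists_gt h fun _ hw => ⟨j, hw⟩

theorem voter_simplex_inf_general (n m : ℕ)
    (B : ℝ) (hB : (m : ℝ) ≤ B)
    (ρ : Fin n → Fin m ≃ Fin m)
    (y : Fin n → Fin n → ℝ) (hy : ∀ j k, y j k = if k = j then B else 0)
    (x : Fin m → Fin n → ℝ) (hx : ∀ i k, x i k = -(((ρ k i : ℕ) : ℝ) + 1)) :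
    (∀ (j : Fin n) (i : Fin m),
        (⨆ k, |y j k - x i k|) = B + (((ρ j i : ℕ) : ℝ) + 1)) ∧
    (∀ (j : Fin n) (i i' : Fin m), (ρ j i : ℕ) < (ρ j i' : ℕ) →
        (⨆ k, |y j k - x i k|) < ⨆ k, |y j k - x i' k|) := by
  have hB₀ : 0 ≤ B := (Nat.cast_nonneg m).trans hB
  have coord : ∀ j k i, |y j k - x i k| = (if k = j then B else 0) + (((ρ k i : ℕ) : ℝ) + 1) := by
    intro j k i
    rw [hy, hx, sub_neg_eq_add, abs_of_nonneg (by split_ifs <;> positivity)]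
  -- The `j`-th coordinate dominates: every other one is a rank, at most `m ≤ B`.
  have dist : ∀ j i, (⨆ k, |y j k - x i k|) = B + (((ρ j i : ℕ) : ℝ) + 1) := by
    intro j i
    refine (ciSup_eq_of_forall_le j fun k => ?_).trans (by simp [coord])
    rcases eq_or_ne k j with rfl | hkj
    · exact le_rfl
    have hrank : ((ρ k i : ℕ) : ℝ) + 1 ≤ m := by exact_mod_cast (ρ k i).isLt
    rw [coord, coord, if_pos rfl, if_neg hkj]
    linarith [(ρ j i : ℕ).cast_nonneg (α := ℝ)]
  refine ⟨dist, fun j i i' hlt => ?_⟩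
  rw [dist, dist]
  gcongr

/-- Voter-simplex embedding under the ℓ∞ norm: voter `j` at `B·e_j ∈ ℝⁿ` with `B ≥ m`, candidate
`i` at `(-ρ(i,1), …, -ρ(i,n))` with rank `ρ(i,j) = (ρ j i) + 1 ∈ {1,…,m}`. Then the ℓ∞-distance
from voter `j` to candidate `i` equals `B + ρ(i,j)`, hence is strictly increasing in rank. -/
theorem voter_simplex_inf (n m : ℕ) (hn : 1 ≤ n) (hm : 1 ≤ m)
    (B : ℝ) (hB : (m : ℝ) ≤ B)
    (ρ : Fin n → Fin m ≃ Fin m)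
    (y : Fin n → Fin n → ℝ) (hy : ∀ j k, y j k = if k = j then B else 0)
    (x : Fin m → Fin n → ℝ) (hx : ∀ i k, x i k = -(((ρ k i : ℕ) : ℝ) + 1)) :
    (∀ (j : Fin n) (i : Fin m),
        (⨆ k, |y j k - x i k|) = B + (((ρ j i : ℕ) : ℝ) + 1)) ∧
    (∀ (j : Fin n) (i i' : Fin m), (ρ j i : ℕ) < (ρ j i' : ℕ) →
        (⨆ k, |y j k - x i k|) < ⨆ k, |y j k - x i' k|) :=
  voter_simplex_inf_general n m B hB ρ y hy x hx
end

section
/- Let p > 1, n ≥ 1, m ≥ 1, and for each voter j a bijection ρ(·,j) : {1,…,m} → {1,…,m}. There exists B > 0 such that placing voter j at y_j = B·e_j ∈ ℝⁿ and candidate i at x_i = (−ρ(i,1),…,−ρ(i,n)), for all voters j and candidates i, k with ρ(i,j) < ρ(k,j), the ℓᵖ-distance from y_j to x_i is strictly less than the ℓᵖ-distance from y_j to x_k. -/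
/-!
Voter `j` sits at distance `B + ρ(i,j)` from candidate `i` in coordinate `j`, and at distance
`ρ(i,l) ∈ [1, m]` in every other coordinate `l`. By Bernoulli's inequality, raising the rank in
coordinate `j` by at least one increases `(B + ρ(i,j))ᵖ` by at least `p Bᵖ⁻¹`, which tends to
infinity with `B` since `p > 1`; once it exceeds `n mᵖ` it outweighs all other coordinates.
-/

open Real Finset Filter

theorem rpow_add_mul_rpow_sub_one_le_add_rpow {x h p : ℝ} (hx : 0 < x) (hh : 0 ≤ h)
    (hp : 1 ≤ p) : x ^ p + p * h * x ^ (p - 1) ≤ (x + h) ^ p := by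
  have hbern : 1 + p * (h / x) ≤ (1 + h / x) ^ p :=
    one_add_mul_self_le_rpow_one_add (by linarith [div_nonneg hh hx.le]) hp
  calc x ^ p + p * h * x ^ (p - 1) = x ^ p * (1 + p * (h / x)) := by
        rw [rpow_sub hx, rpow_one]; field_simp
    _ ≤ x ^ p * (1 + h / x) ^ p := by gcongr
    _ = (x + h) ^ p := by
        rw [← mul_rpow hx.le (by positivity)]; congr 1; field_simp

theorem add_rpow_add_mul_rpow_sub_one_le {B a b p : ℝ} (hB : 0 < B) (ha : 0 ≤ a)
    (hab : a + 1 ≤ b) (hp : 1 ≤ p) : (B + a) ^ p + p * B ^ (p - 1) ≤ (B + b) ^ p := by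
  have hBa : 0 < B + a := by linarith
  have hbern := rpow_add_mul_rpow_sub_one_le_add_rpow hBa zero_le_one hp
  rw [mul_one] at hbern
  calc (B + a) ^ p + p * B ^ (p - 1) ≤ (B + a) ^ p + p * (B + a) ^ (p - 1) := by
        gcongr; linarith
    _ ≤ (B + a + 1) ^ p := hbern
    _ ≤ (B + b) ^ p := rpow_le_rpow (by linarith) (by linarith) (by linarith)

section Simplex

variable {ι : Type*} [Fintype ι] [DecidableEq ι]

theorem sum_abs_single_sub_neg_rpow {B p : ℝ} (hB : 0 ≤ B) {c : ι → ℝ} (hc : ∀ l, 0 ≤ c l)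
    (j : ι) :
    ∑ l, |(if l = j then B else 0) - -c l| ^ p =
      (B + c j) ^ p + ∑ l ∈ univ.erase j, c l ^ p := by
  rw [← add_sum_erase _ _ (mem_univ j), if_pos rfl, sub_neg_eq_add,
    abs_of_nonneg (add_nonneg hB (hc j))]
  congr 1
  refine sum_congr rfl fun l hl => ?_
  rw [if_neg (ne_of_mem_erase hl), zero_sub, neg_neg, abs_of_nonneg (hc l)]

theorem sum_abs_single_sub_neg_rpow_lt {B M p : ℝ} (hB : 0 < B) (hp : 1 ≤ p)
    (hBM : Fintype.card ι * M ^ p < p * B ^ (p - 1)) {c d : ι → ℝ} (hc : ∀ l, 0 ≤ c l)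
    (hcM : ∀ l, c l ≤ M) (hd : ∀ l, 0 ≤ d l) {j : ι} (hcd : c j + 1 ≤ d j) :
    ∑ l, |(if l = j then B else 0) - -c l| ^ p < ∑ l, |(if l = j then B else 0) - -d l| ^ p := by
  rw [sum_abs_single_sub_neg_rpow hB.le hc, sum_abs_single_sub_neg_rpow hB.le hd]
  have hrest_c : ∑ l ∈ univ.erase j, c l ^ p ≤ Fintype.card ι * M ^ p := calc
    ∑ l ∈ univ.erase j, c l ^ p ≤ ∑ l, c l ^ p :=
      sum_le_sum_of_subset_of_nonneg (erase_subset _ _) fun l _ _ => rpow_nonneg (hc l) p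
    _ ≤ ∑ _l : ι, M ^ p := sum_le_sum fun l _ => rpow_le_rpow (hc l) (hcM l) (by linarith)
    _ = Fintype.card ι * M ^ p := by simp
  have hrest_d : 0 ≤ ∑ l ∈ univ.erase j, d l ^ p := sum_nonneg fun l _ => rpow_nonneg (hd l) p
  linarith [add_rpow_add_mul_rpow_sub_one_le hB (hc j) hcd hp]

end Simplex

theorem voter_simplex_lp_general (n m : ℕ) (p : ℝ) (hp : 1 < p)
    (ρ : Fin n → Fin m ≃ Fin m) :
    ∃ B : ℝ, 0 < B ∧
      ∀ (j : Fin n) (i k : Fin m), (ρ j i : ℕ) < (ρ j k : ℕ) →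
        (∑ l, |(if l = j then B else 0) - (-(((ρ l i : ℕ) : ℝ) + 1))| ^ p) ^ (1 / p) <
        (∑ l, |(if l = j then B else 0) - (-(((ρ l k : ℕ) : ℝ) + 1))| ^ p) ^ (1 / p) := by
  obtain ⟨B, hB, hBM⟩ := ((eventually_gt_atTop 0).and
    ((tendsto_rpow_atTop (sub_pos.2 hp)).eventually_gt_atTop (n * (m : ℝ) ^ p / p))).exists
  rw [div_lt_iff₀' (by linarith)] at hBM
  refine ⟨B, hB, fun j i k hik => ?_⟩
  have hrank_nonneg (i : Fin m) (l : Fin n) : 0 ≤ ((ρ l i : ℕ) : ℝ) + 1 := by positivity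
  have hrank_le (i : Fin m) (l : Fin n) : ((ρ l i : ℕ) : ℝ) + 1 ≤ m := by
    exact_mod_cast (ρ l i).isLt
  refine rpow_lt_rpow (sum_nonneg fun l _ => by positivity) ?_ (by positivity)
  refine sum_abs_single_sub_neg_rpow_lt hB hp.le (by simpa using hBM) (hrank_nonneg i)
    (hrank_le i) (hrank_nonneg k) ?_
  have : ((ρ j i : ℕ) : ℝ) + 1 ≤ (ρ j k : ℕ) := by exact_mod_cast hik
  linarith

/-- Voter-simplex embedding under ℓᵖ norms, `p > 1`: there is `B > 0` such that, placing voter `j`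
at `B·e_j ∈ ℝⁿ` and candidate `i` at `(-ρ(i,1), …, -ρ(i,n))` (rank `ρ(i,j) = (ρ j i) + 1`),
whenever `ρ(i,j) < ρ(k,j)` the ℓᵖ-distance from voter `j` to candidate `i` is strictly smaller
than that to candidate `k`. -/
theorem voter_simplex_lp (n m : ℕ) (hn : 1 ≤ n) (hm : 1 ≤ m) (p : ℝ) (hp : 1 < p)
    (ρ : Fin n → Fin m ≃ Fin m) :
    ∃ B : ℝ, 0 < B ∧
      ∀ (j : Fin n) (i k : Fin m), (ρ j i : ℕ) < (ρ j k : ℕ) →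
        (∑ l, |(if l = j then B else 0) - (-(((ρ l i : ℕ) : ℝ) + 1))| ^ p) ^ (1 / p) <
        (∑ l, |(if l = j then B else 0) - (-(((ρ l k : ℕ) : ℝ) + 1))| ^ p) ^ (1 / p) :=
  voter_simplex_lp_general n m p hp ρ
end

section
/- (Median voter theorem, 1-dimensional spatial model) Suppose an odd number n of voters and m ≥ 1 candidates are located at points of ℝ, each voter ranks candidates by increasing distance |v − c| with all ties broken consistently (assume all distances from each voter to distinct candidates are distinct). Let v* be the median voter position and let c* be the candidate closest to v*. Then c* is a Condorcet winner: for every other candidate c, more than half the voters are strictly closer to c* than to c. -/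
/-! For candidates `a`, `b`, `|x - a|² - |x - b|² = (b - a) * (2x - a - b)` is affine
in `x`. So every voter on the side of the median `v*` facing away from a rival `c` likes `c*` over
`c` at least as much as `v*` does, hence strictly, ties being excluded. That side holds at least
half of the voters, and since `n` is odd, at least half means more than half. -/

lemma abs_sub_lt_abs_sub_of_abs_sub_le {α : Type*} [CommRing α] [LinearOrder α]
    [IsStrictOrderedRing α] {x m a b : α} (hm : |m - a| ≤ |m - b|) (hx : (x - m) * (b - a) ≤ 0)
    (hne : |x - a| ≠ |x - b|) : |x - a| < |x - b| := by
  rw [← sq_le_sq] at hm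
  refine lt_of_le_of_ne ?_ hne
  rw [← sq_le_sq]
  nlinarith

lemma lt_two_mul_card_of_odd {α : Type*} [Finite α] {n : ℕ} {P Q : α → Prop} (hn : Odd n)
    (hP : n ≤ 2 * Nat.card {a // P a}) (hPQ : ∀ a, P a → Q a) :
    n < 2 * Nat.card {a // Q a} := by
  have hmono : Nat.card {a // P a} ≤ Nat.card {a // Q a} :=
    Nat.card_mono (Set.toFinite {a | Q a}) hPQ
  obtain ⟨k, rfl⟩ := hn
  omega

theorem median_voter_theorem_general (n m : ℕ) (hn : Odd n)
    (V : Fin n → ℝ) (C : Fin m → ℝ)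
    (hdist : ∀ (v : Fin n) (i k : Fin m), i ≠ k → |V v - C i| ≠ |V v - C k|)
    (vstar : ℝ)
    (hle : 2 * Nat.card {v : Fin n // V v ≤ vstar} ≥ n)
    (hge : 2 * Nat.card {v : Fin n // vstar ≤ V v} ≥ n)
    (istar : Fin m) (hmin : ∀ i, |vstar - C istar| ≤ |vstar - C i|) :
    ∀ i, i ≠ istar →
      2 * Nat.card {v : Fin n // |V v - C istar| < |V v - C i|} > n := by
  intro i hi
  have closer : ∀ v, (V v - vstar) * (C i - C istar) ≤ 0 → |V v - C istar| < |V v - C i| :=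
    fun v hv => abs_sub_lt_abs_sub_of_abs_sub_le (hmin i) hv (hdist v istar i hi.symm)
  rcases le_total (C istar) (C i) with h | h
  · exact lt_two_mul_card_of_odd hn hle fun v hv =>
      closer v (mul_nonpos_of_nonpos_of_nonneg (sub_nonpos.2 hv) (sub_nonneg.2 h))
  · exact lt_two_mul_card_of_odd hn hge fun v hv =>
      closer v (mul_nonpos_of_nonneg_of_nonpos (sub_nonneg.2 hv) (sub_nonpos.2 h))

/-- Median voter theorem in one dimension: with an odd number of voters, tie-free distances,
a median voter position `vstar`, and `cstar` the candidate closest to `vstar`, the candidate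
`cstar` beats every other candidate: more than half the voters are strictly closer to it. -/
theorem median_voter_theorem (n m : ℕ) (hn : Odd n) (hm : 1 ≤ m)
    (V : Fin n → ℝ) (C : Fin m → ℝ)
    (hdist : ∀ (v : Fin n) (i k : Fin m), i ≠ k → |V v - C i| ≠ |V v - C k|)
    (vstar : ℝ)
    (hle : 2 * Nat.card {v : Fin n // V v ≤ vstar} ≥ n)
    (hge : 2 * Nat.card {v : Fin n // vstar ≤ V v} ≥ n)
    (istar : Fin m) (hmin : ∀ i, |vstar - C istar| ≤ |vstar - C i|) :
    ∀ i, i ≠ istar →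
      2 * Nat.card {v : Fin n // |V v - C istar| < |V v - C i|} > n :=
  median_voter_theorem_general n m hn V C hdist vstar hle hge istar hmin
end
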